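/- Let μ ∈ ℂ with μ ≠ 0, and suppose the subgroup Γ_μ of SL(2,ℂ) generated by X and Y_μ is discrete. Let W ∈ SL(2,ℂ) be such that W = X·U·Y_μ·U⁻¹ for some U ∈ Γ_μ, or W = X·U·X⁻¹·U⁻¹ for some U ∈ Γ_μ. Then either tr(W) = 2 or |tr(W) − 2| ≥ 1. -/

import Mathlib

/-!
Write `W = X V` with `V = U P U⁻¹`, where `P` is `Y μ` or `X⁻¹`. Then `V ∈ Γ_μ` has trace `2`, so
`tr W - 2` is the lower-left entry `c` of `V`, and it suffices to prove Shimizu's lemma: in a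
discrete subgroup of `SL(2, ℂ)` containing `X`, every element with `c ≠ 0` has `|c| ≥ 1`.
Otherwise the iterates `A ↦ A X A⁻¹` have lower-left entries `-c², -c⁴, …` and converge to `X`,
so they are eventually equal to `X`, although their lower-left entries never vanish.
-/

open Matrix

noncomputable def X : Matrix.SpecialLinearGroup (Fin 2) ℂ :=
  ⟨!![1, 1; 0, 1], by simp [Matrix.det_fin_two_of]⟩

noncomputable def Y (μ : ℂ) : Matrix.SpecialLinearGroup (Fin 2) ℂ :=
  ⟨!![1, 0; μ, 1], by simp [Matrix.det_fin_two_of]⟩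

noncomputable instance : TopologicalSpace (Matrix.SpecialLinearGroup (Fin 2) ℂ) :=
  TopologicalSpace.induced ((↑) : Matrix.SpecialLinearGroup (Fin 2) ℂ → Matrix (Fin 2) (Fin 2) ℂ)
    inferInstance

open Filter Topology
open scoped MatrixGroups

lemma eventually_eq_of_tendsto_of_discreteTopology {α β : Type*} [TopologicalSpace α]
    {s : Set α} [DiscreteTopology s] {l : Filter β} {f : β → α} (hf : ∀ b, f b ∈ s)
    {x : α} (hx : x ∈ s) (h : Tendsto f l (𝓝 x)) : ∀ᶠ b in l, f b = x := by
  have hs : Tendsto (fun b ↦ (⟨f b, hf b⟩ : s)) l (𝓝 ⟨x, hx⟩) := tendsto_subtype_rng.2 h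
  rw [nhds_discrete, tendsto_pure] at hs
  exact hs.mono fun _ hb ↦ congrArg Subtype.val hb

lemma coe_X : (X : Matrix (Fin 2) (Fin 2) ℂ) = !![1, 1; 0, 1] := rfl

lemma coe_Y (μ : ℂ) : (Y μ : Matrix (Fin 2) (Fin 2) ℂ) = !![1, 0; μ, 1] := rfl

lemma tendsto_nhds_iff_tendsto_coe {β : Type*} {l : Filter β} {f : β → SL(2, ℂ)} {A : SL(2, ℂ)} :
    Tendsto f l (𝓝 A) ↔
      Tendsto (fun b ↦ (f b : Matrix (Fin 2) (Fin 2) ℂ)) l (𝓝 (A : Matrix (Fin 2) (Fin 2) ℂ)) :=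
  (Topology.IsInducing.induced _).tendsto_nhds_iff

lemma coe_mul_X_mul_inv (M : SL(2, ℂ)) :
    ((M * X * M⁻¹ : SL(2, ℂ)) : Matrix (Fin 2) (Fin 2) ℂ) =
      !![1 - M 0 0 * M 1 0, M 0 0 ^ 2; -M 1 0 ^ 2, 1 + M 0 0 * M 1 0] := by
  have hdet : M 0 0 * M 1 1 - M 0 1 * M 1 0 = 1 := by rw [← det_fin_two]; exact M.det_coe
  ext i j
  fin_cases i <;> fin_cases j <;>
    simp [adjugate_fin_two, mul_apply, Fin.sum_univ_two, coe_X]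
  · linear_combination hdet
  · ring
  · ring
  · linear_combination hdet

noncomputable def shimizuSeq (A : SL(2, ℂ)) : ℕ → SL(2, ℂ)
  | 0 => A
  | n + 1 => shimizuSeq A n * X * (shimizuSeq A n)⁻¹

namespace shimizuSeq

lemma mem {Γ : Subgroup SL(2, ℂ)} (hX : X ∈ Γ) {A : SL(2, ℂ)} (hA : A ∈ Γ) :
    ∀ n, shimizuSeq A n ∈ Γ
  | 0 => hA
  | n + 1 => mul_mem (mul_mem (mem hX hA n) hX) (inv_mem (mem hX hA n))

variable (A : SL(2, ℂ))

lemma coe_succ (n : ℕ) : (shimizuSeq A (n + 1) : Matrix (Fin 2) (Fin 2) ℂ) =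
    !![1 - shimizuSeq A n 0 0 * shimizuSeq A n 1 0, shimizuSeq A n 0 0 ^ 2;
      -shimizuSeq A n 1 0 ^ 2, 1 + shimizuSeq A n 0 0 * shimizuSeq A n 1 0] :=
  coe_mul_X_mul_inv _

lemma apply_one_zero_succ (n : ℕ) : shimizuSeq A (n + 1) 1 0 = -shimizuSeq A n 1 0 ^ 2 := by
  rw [coe_succ]; simp

lemma apply_zero_zero_succ (n : ℕ) :
    shimizuSeq A (n + 1) 0 0 = 1 - shimizuSeq A n 0 0 * shimizuSeq A n 1 0 := by
  rw [coe_succ]; simp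

lemma norm_apply_one_zero (n : ℕ) : ‖shimizuSeq A n 1 0‖ = ‖A 1 0‖ ^ 2 ^ n := by
  induction n with
  | zero => simp [shimizuSeq]
  | succ n ih => rw [apply_one_zero_succ, norm_neg, norm_pow, ih, ← pow_mul, pow_succ]

variable {A}

lemma apply_one_zero_ne_zero (hA : A 1 0 ≠ 0) : ∀ n, shimizuSeq A n 1 0 ≠ 0
  | 0 => hA
  | n + 1 => by
    rw [apply_one_zero_succ]
    exact neg_ne_zero.2 (pow_ne_zero 2 (apply_one_zero_ne_zero hA n))

lemma norm_apply_one_zero_le (hA : ‖A 1 0‖ ≤ 1) (n : ℕ) : ‖shimizuSeq A n 1 0‖ ≤ ‖A 1 0‖ := by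
  rw [norm_apply_one_zero]
  exact pow_le_of_le_one (norm_nonneg _) hA (pow_ne_zero n two_ne_zero)

lemma tendsto_apply_one_zero (hA : ‖A 1 0‖ < 1) :
    Tendsto (fun n ↦ shimizuSeq A n 1 0) atTop (𝓝 0) := by
  rw [tendsto_zero_iff_norm_tendsto_zero]
  simp_rw [norm_apply_one_zero]
  exact (tendsto_pow_atTop_nhds_zero_of_lt_one (norm_nonneg _) hA).comp
    (tendsto_pow_atTop_atTop_of_one_lt one_lt_two)

lemma norm_apply_zero_zero_le (hA : ‖A 1 0‖ < 1) (n : ℕ) :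
    ‖shimizuSeq A n 0 0‖ ≤ max ‖A 0 0‖ (1 - ‖A 1 0‖)⁻¹ := by
  set C := max ‖A 0 0‖ (1 - ‖A 1 0‖)⁻¹
  have hC : 1 + C * ‖A 1 0‖ ≤ C := by
    have := (inv_le_iff_one_le_mul₀ (sub_pos.2 hA)).1 (le_max_right ‖A 0 0‖ _)
    nlinarith
  induction n with
  | zero => exact le_max_left _ _
  | succ n ih =>
    calc ‖shimizuSeq A (n + 1) 0 0‖
        ≤ 1 + ‖shimizuSeq A n 0 0‖ * ‖shimizuSeq A n 1 0‖ := by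
          rw [apply_zero_zero_succ, ← norm_mul]
          exact (norm_sub_le _ _).trans_eq (by rw [norm_one])
      _ ≤ 1 + C * ‖A 1 0‖ := by
          gcongr
          exact norm_apply_one_zero_le hA.le n
      _ ≤ C := hC

lemma tendsto_apply_zero_zero_mul_apply_one_zero (hA : ‖A 1 0‖ < 1) :
    Tendsto (fun n ↦ shimizuSeq A n 0 0 * shimizuSeq A n 1 0) atTop (𝓝 0) := by
  refine squeeze_zero_norm (fun n ↦ ?_)
    (((tendsto_apply_one_zero hA).norm.const_mul (max ‖A 0 0‖ (1 - ‖A 1 0‖)⁻¹)).trans_eq ?_)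
  · rw [norm_mul]
    exact mul_le_mul_of_nonneg_right (norm_apply_zero_zero_le hA n) (norm_nonneg _)
  · simp

lemma tendsto_apply_zero_zero (hA : ‖A 1 0‖ < 1) :
    Tendsto (fun n ↦ shimizuSeq A n 0 0) atTop (𝓝 1) := by
  rw [← tendsto_add_atTop_iff_nat 1]
  simp_rw [apply_zero_zero_succ]
  simpa using (tendsto_apply_zero_zero_mul_apply_one_zero hA).const_sub 1

lemma tendsto_X (hA : ‖A 1 0‖ < 1) : Tendsto (shimizuSeq A) atTop (𝓝 X) := by
  rw [tendsto_nhds_iff_tendsto_coe, ← tendsto_add_atTop_iff_nat 1]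
  simp_rw [coe_succ, coe_X]
  have hac := tendsto_apply_zero_zero_mul_apply_one_zero hA
  refine tendsto_pi_nhds.2 fun i ↦ tendsto_pi_nhds.2 fun j ↦ ?_
  fin_cases i <;> fin_cases j <;> simp
  · simpa using hac.const_sub 1
  · simpa using (tendsto_apply_zero_zero hA).pow 2
  · simpa using ((tendsto_apply_one_zero hA).pow 2).neg
  · simpa using hac.const_add 1

end shimizuSeq

theorem one_le_norm_apply_one_zero_of_mem {Γ : Subgroup SL(2, ℂ)} [DiscreteTopology Γ]
    (hX : X ∈ Γ) {A : SL(2, ℂ)} (hA : A ∈ Γ) (hc : A 1 0 ≠ 0) : 1 ≤ ‖A 1 0‖ := by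
  by_contra! hlt
  obtain ⟨n, hn⟩ := (eventually_eq_of_tendsto_of_discreteTopology (s := Γ)
    (shimizuSeq.mem hX hA) hX (shimizuSeq.tendsto_X hlt)).exists
  exact shimizuSeq.apply_one_zero_ne_zero hc n (by rw [hn]; rfl)

lemma trace_X_mul (V : SL(2, ℂ)) :
    trace ((X * V : SL(2, ℂ)) : Matrix (Fin 2) (Fin 2) ℂ) =
      trace (V : Matrix (Fin 2) (Fin 2) ℂ) + V 1 0 := by
  rw [Matrix.SpecialLinearGroup.coe_mul, trace_fin_two, trace_fin_two, mul_apply, mul_apply]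
  simp [Fin.sum_univ_two, coe_X]
  ring

lemma trace_coe_conj (U P : SL(2, ℂ)) :
    trace ((U * P * U⁻¹ : SL(2, ℂ)) : Matrix (Fin 2) (Fin 2) ℂ) =
      trace (P : Matrix (Fin 2) (Fin 2) ℂ) := by
  rw [Matrix.SpecialLinearGroup.coe_mul, Matrix.SpecialLinearGroup.coe_mul, trace_mul_cycle,
    ← Matrix.SpecialLinearGroup.coe_mul, inv_mul_cancel, Matrix.SpecialLinearGroup.coe_one, one_mul]

theorem trace_X_mul_conj_eq_two_or_one_le {Γ : Subgroup SL(2, ℂ)} [DiscreteTopology Γ]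
    (hX : X ∈ Γ) {U P : SL(2, ℂ)} (hU : U ∈ Γ) (hP : P ∈ Γ)
    (hP₂ : trace (P : Matrix (Fin 2) (Fin 2) ℂ) = 2) :
    trace ((X * U * P * U⁻¹ : SL(2, ℂ)) : Matrix (Fin 2) (Fin 2) ℂ) = 2 ∨
      1 ≤ ‖trace ((X * U * P * U⁻¹ : SL(2, ℂ)) : Matrix (Fin 2) (Fin 2) ℂ) - 2‖ := by
  have hW : trace ((X * U * P * U⁻¹ : SL(2, ℂ)) : Matrix (Fin 2) (Fin 2) ℂ) - 2 =
      (U * P * U⁻¹) 1 0 := by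
    rw [mul_assoc X U, mul_assoc X, trace_X_mul, trace_coe_conj, hP₂, add_sub_cancel_left]
  rw [← sub_eq_zero, hW]
  exact or_iff_not_imp_left.2 <|
    one_le_norm_apply_one_zero_of_mem hX (mul_mem (mul_mem hU hP) (inv_mem hU))

lemma trace_Y (μ : ℂ) : trace (Y μ : Matrix (Fin 2) (Fin 2) ℂ) = 2 := by
  rw [coe_Y, trace_fin_two_of]; norm_num

lemma trace_X_inv : trace ((X⁻¹ : SL(2, ℂ)) : Matrix (Fin 2) (Fin 2) ℂ) = 2 := by
  rw [Matrix.SpecialLinearGroup.coe_inv, coe_X, adjugate_fin_two_of, trace_fin_two_of]; norm_num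

theorem farey_trace_bound_general (μ : ℂ)
    (hdisc : DiscreteTopology
      (Subgroup.closure ({X, Y μ} : Set (Matrix.SpecialLinearGroup (Fin 2) ℂ))))
    (W : Matrix.SpecialLinearGroup (Fin 2) ℂ)
    (h : (∃ U ∈ Subgroup.closure ({X, Y μ} : Set (Matrix.SpecialLinearGroup (Fin 2) ℂ)),
            W = X * U * Y μ * U⁻¹) ∨
         (∃ U ∈ Subgroup.closure ({X, Y μ} : Set (Matrix.SpecialLinearGroup (Fin 2) ℂ)),
            W = X * U * X⁻¹ * U⁻¹)) :
    Matrix.trace (W : Matrix (Fin 2) (Fin 2) ℂ) = 2 ∨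
      1 ≤ ‖Matrix.trace (W : Matrix (Fin 2) (Fin 2) ℂ) - 2‖ := by
  have hX : X ∈ Subgroup.closure {X, Y μ} := Subgroup.subset_closure (by simp)
  rcases h with ⟨U, hU, rfl⟩ | ⟨U, hU, rfl⟩
  · exact trace_X_mul_conj_eq_two_or_one_le hX hU (Subgroup.subset_closure (by simp)) (trace_Y μ)
  · exact trace_X_mul_conj_eq_two_or_one_le hX hU (inv_mem hX) trace_X_inv

/-- If Γ_μ is discrete and μ ≠ 0 and W has one of the two Farey forms with U ∈ Γ_μ, then
tr(W) = 2 or |tr(W) − 2| ≥ 1. -/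
theorem farey_trace_bound (μ : ℂ) (hμ : μ ≠ 0)
    (hdisc : DiscreteTopology
      (Subgroup.closure ({X, Y μ} : Set (Matrix.SpecialLinearGroup (Fin 2) ℂ))))
    (W : Matrix.SpecialLinearGroup (Fin 2) ℂ)
    (h : (∃ U ∈ Subgroup.closure ({X, Y μ} : Set (Matrix.SpecialLinearGroup (Fin 2) ℂ)),
            W = X * U * Y μ * U⁻¹) ∨
         (∃ U ∈ Subgroup.closure ({X, Y μ} : Set (Matrix.SpecialLinearGroup (Fin 2) ℂ)),
            W = X * U * X⁻¹ * U⁻¹)) :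
    Matrix.trace (W : Matrix (Fin 2) (Fin 2) ℂ) = 2 ∨
      1 ≤ ‖Matrix.trace (W : Matrix (Fin 2) (Fin 2) ℂ) - 2‖ :=
  farey_trace_bound_general μ hdisc W h
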